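/- arXiv:2404.09974 — 2 statements merged into one kernel-verified Lean document; each statement's English description precedes it below -/
import Mathlib

section
/- The map ψ_u : L → E^× given by ψ_u(x/π_L^n) = η(x, u_n) is well-defined (independent of the representation x/π_L^n of an element of L), trivial on o_L, but nontrivial on π_L^{-1} o_L; in particular the largest integer n with π_L^{-n} o_L ⊆ ker(ψ_u) is n(ψ_u) = 0. -/
/-!  Statement 1: the character `ψ_u : L → E^×`, `ψ_u(x/π_L^n) = η(x, u_n)`, is
well defined, trivial on `o_L`, nontrivial on `π_L^{-1} o_L`, and `n(ψ_u) = 0`.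

Here `η n : o_L → E` is the finite-order character `x ↦ η(x, u_n)` attached to
the Lubin-Tate torsion point `u_n`, with compatibility `η (n+1) (π_L x) = η n x`
and `η n` trivial on `π_L^n o_L`, nontrivial for `n = 1`.  -/

theorem statement1 {L E : Type*} [Field L] [Field E]
    (O : Subring L) (π : L) (hπO : π ∈ O) (hπ0 : π ≠ 0)
    -- every element of `L` is of the form `x/π^n` with `x ∈ o_L`
    (hcover : ∀ y : L, ∃ (n : ℕ) (x : O), y = (x : L) / π ^ n)
    (η : ℕ → O → E)
    (hηmul : ∀ (n : ℕ) (x y : O), η n (x + y) = η n x * η n y)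
    (hηcompat : ∀ (n : ℕ) (x : O), η (n + 1) (⟨π, hπO⟩ * x) = η n x)
    (hηtriv : ∀ (n : ℕ) (x : O), η n ((⟨π, hπO⟩ : O) ^ n * x) = 1)
    (hηnt : ∃ a : O, η 1 a ≠ 1) :
    ∃ ψ : L → E,
      -- `ψ_u` is a character . . .
      (∀ x y : L, ψ (x + y) = ψ x * ψ y) ∧
      -- . . . well defined by the formula `ψ_u(x/π_L^n) = η(x, u_n)` . . .
      (∀ (n : ℕ) (x : O), ψ ((x : L) / π ^ n) = η n x) ∧
      -- . . . trivial on `o_L` . . .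
      (∀ x : O, ψ (x : L) = 1) ∧
      -- . . . but nontrivial on `π_L^{-1} o_L`;
      (¬ ∀ x : O, ψ ((x : L) / π) = 1) ∧
      -- in particular, the largest `n` with `π_L^{-n} o_L ⊆ ker ψ_u` is `n(ψ_u) = 0`
      IsGreatest {n : ℕ | ∀ x : O, ψ ((x : L) / π ^ n) = 1} 0 := by

  set Pi : O := ⟨π, hπO⟩ with hPi
  -- lifting lemma
  have hlift : ∀ (k n : ℕ) (x : O), η (n + k) (Pi ^ k * x) = η n x := by
    intro k
    induction k with
    | zero => intro n x; simp
    | succ k ih =>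
      intro n x
      have : Pi ^ (k + 1) * x = Pi * (Pi ^ k * x) := by ring
      rw [this, show n + (k + 1) = (n + k) + 1 from rfl, hηcompat, ih]
  -- well-definedness
  have key : ∀ (n m : ℕ) (x y : O), (x : L) / π ^ n = (y : L) / π ^ m →
      η n x = η m y := by
    have main : ∀ (n k : ℕ) (x y : O),
        (x : L) / π ^ n = (y : L) / π ^ (n + k) → η n x = η (n + k) y := by
      intro n k x y h
      have hπn : π ^ n ≠ 0 := pow_ne_zero _ hπ0
      have hπnk : π ^ (n + k) ≠ 0 := pow_ne_zero _ hπ0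
      rw [div_eq_div_iff hπn hπnk] at h
      have hy : y = Pi ^ k * x := by
        apply Subtype.ext
        push_cast
        have hx : (x : L) * π ^ (n + k) = (x : L) * π ^ k * π ^ n := by ring
        rw [hx] at h
        field_simp at h
        rw [← h]; ring
      rw [hy, hlift]
    intro n m x y h
    rcases le_total n m with hle | hle
    · obtain ⟨k, rfl⟩ := Nat.exists_eq_add_of_le hle
      exact main n k x y h
    · obtain ⟨k, rfl⟩ := Nat.exists_eq_add_of_le hle
      exact (main m k y x h.symm).symm
  choose N X hNX using hcover
  refine ⟨fun y => η (N y) (X y), ?_, ?_, ?_, ?_, ?_⟩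
  case refine_2 =>
    intro n x
    exact key _ _ _ _ ((hNX _).symm)
  all_goals
    have hψ : ∀ (n : ℕ) (x : O), η (N ((x : L) / π ^ n)) (X ((x : L) / π ^ n)) = η n x :=
      fun n x => key _ _ _ _ ((hNX _).symm)
  · -- character
    intro a b
    obtain ⟨n, x, rfl⟩ : ∃ (n : ℕ) (x : O), a = (x : L) / π ^ n := ⟨N a, X a, hNX a⟩
    obtain ⟨m, y, rfl⟩ : ∃ (m : ℕ) (y : O), b = (y : L) / π ^ m := ⟨N b, X b, hNX b⟩
    have hsum : (x : L) / π ^ n + (y : L) / π ^ m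
        = ((Pi ^ m * x + Pi ^ n * y : O) : L) / π ^ (n + m) := by
      push_cast
      field_simp
      ring
    beta_reduce
    rw [hsum, hψ, hψ, hψ, hηmul]
    have h1 : η (n + m) (Pi ^ m * x) = η n x := hlift m n x
    have h2 : η (n + m) (Pi ^ n * y) = η m y := by rw [add_comm n m]; exact hlift n m y
    rw [h1, h2]
  · -- trivial on O
    intro x
    have h0 : (x : L) = (x : L) / π ^ 0 := by simp
    beta_reduce
    rw [h0, hψ 0 x]
    have := hηtriv 0 x
    simpa using this
  · -- nontrivial on π⁻¹ O
    obtain ⟨a, ha⟩ := hηnt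
    intro hall
    apply ha
    have := hall a
    beta_reduce at this
    rw [show π = π ^ 1 from (pow_one π).symm, hψ 1 a] at this
    exact this
  · -- IsGreatest
    constructor
    · intro x
      beta_reduce
      rw [hψ 0 x]
      simpa using hηtriv 0 x
    · intro n hn
      by_contra hc
      push_neg at hc
      obtain ⟨a, ha⟩ := hηnt
      apply ha
      have h1n : 1 ≤ n := hc
      obtain ⟨k, rfl⟩ := Nat.exists_eq_add_of_le h1n
      have := hn (Pi ^ k * a)
      beta_reduce at this
      rw [hψ] at this
      rw [show 1 + k = 1 + k from rfl] at this
      rw [hlift k 1 a] at this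
      exact this
end

section
/- If α : V → W is a continuous linear map of Hausdorff LF-spaces over F with finite-dimensional cokernel, then α is strict and has closed image. -/
open Filter Topology Set Function UniformSpace Pointwise
open scoped Uniformity

noncomputable section

namespace Statement8

variable {F : Type*} [NontriviallyNormedField F]

theorem aux_completableTopField : CompletableTopField F := by
  refine ⟨fun Φ hΦ h0 => ?_⟩
  obtain ⟨U, hU, V, hV, hUV⟩ := Filter.inf_eq_bot_iff.mp h0
  obtain ⟨ε, εpos, hball⟩ := Metric.mem_nhds_iff.mp hU
  have hVnorm : ∀ x ∈ V, ε ≤ ‖x‖ := by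
    intro x hx
    by_contra h
    push_neg at h
    have hx0 : x ∈ U := hball (by simpa [mem_ball_zero_iff] using h)
    have : x ∈ U ∩ V := ⟨hx0, hx⟩
    rw [hUV] at this
    exact this
  rw [Metric.cauchy_iff] at hΦ ⊢
  refine ⟨hΦ.1.map _, fun δ δpos => ?_⟩
  obtain ⟨t, ht, hts⟩ := hΦ.2 (δ * ε * ε) (by positivity)
  refine ⟨(·⁻¹) '' (t ∩ V), image_mem_map (inter_mem ht hV), ?_⟩
  rintro _ ⟨x, ⟨hxt, hxV⟩, rfl⟩ _ ⟨y, ⟨hyt, hyV⟩, rfl⟩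
  have hxε := hVnorm x hxV
  have hyε := hVnorm y hyV
  have hxpos : (0:ℝ) < ‖x‖ := lt_of_lt_of_le εpos hxε
  have hypos : (0:ℝ) < ‖y‖ := lt_of_lt_of_le εpos hyε
  have hx0 : x ≠ 0 := by simpa [norm_pos_iff] using hxpos
  have hy0 : y ≠ 0 := by simpa [norm_pos_iff] using hypos
  have hiden : x⁻¹ - y⁻¹ = x⁻¹ * (y - x) * y⁻¹ := by field_simp
  have hyx : ‖y - x‖ < δ * ε * ε := by
    rw [← dist_eq_norm]
    exact hts y hyt x hxt
  rw [dist_eq_norm, hiden, norm_mul, norm_mul, norm_inv, norm_inv]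
  have h1 : ‖x‖⁻¹ * ‖y - x‖ * ‖y‖⁻¹ ≤ ε⁻¹ * ‖y - x‖ * ε⁻¹ := by gcongr <;> positivity
  have h2 : ε⁻¹ * ‖y - x‖ * ε⁻¹ < ε⁻¹ * (δ * ε * ε) * ε⁻¹ := by gcongr <;> positivity
  have h3 : ε⁻¹ * (δ * ε * ε) * ε⁻¹ = δ := by field_simp
  calc ‖x‖⁻¹ * ‖y - x‖ * ‖y‖⁻¹ ≤ ε⁻¹ * ‖y - x‖ * ε⁻¹ := h1
    _ < ε⁻¹ * (δ * ε * ε) * ε⁻¹ := h2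
    _ = δ := h3

variable [CompletableTopField F]

instance : NontriviallyNormedField (Completion F) :=
  { (inferInstance : NormedField (Completion F)) with
    non_trivial := by
      obtain ⟨x, hx⟩ := NormedField.exists_one_lt_norm F
      exact ⟨(x : F) , by rwa [Completion.norm_coe]⟩ }


section Hat

variable (F)
variable {N : Type*} [AddCommGroup N] [Module F N] [UniformSpace N] [IsUniformAddGroup N]
  [ContinuousSMul F N] [T2Space N] [CompleteSpace N]

/-- Scalar action of the completion of `F` on a complete `F`-module. -/
def hsmul (r : Completion F) (x : N) : N := Completion.extension (fun q : F => q • x) r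

theorem hsmul_uc (x : N) : UniformContinuous (fun q : F => q • x) :=
  uniformContinuous_addMonoidHom_of_continuous
    (f := AddMonoidHom.mk' (fun q : F => q • x) (fun a b => add_smul a b x))
    (continuous_id.smul continuous_const)

theorem hsmul_coe (q : F) (x : N) : hsmul F (q : Completion F) x = q • x :=
  Completion.extension_coe (hsmul_uc F x) q

theorem continuous_hsmul_left (x : N) : Continuous (fun r => hsmul F r x) :=
  Completion.continuous_extension

theorem hsmul_add_r (r s : Completion F) (x : N) :
    hsmul F (r + s) x = hsmul F r x + hsmul F s x := by
  refine Completion.induction_on₂ r s ?_ ?_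
  · exact isClosed_eq ((continuous_hsmul_left F x).comp (continuous_fst.add continuous_snd))
      (((continuous_hsmul_left F x).comp continuous_fst).add
        ((continuous_hsmul_left F x).comp continuous_snd))
  · intro a b
    rw [← Completion.coe_add, hsmul_coe, hsmul_coe, hsmul_coe, add_smul]

theorem hsmul_zero_r (x : N) : hsmul F (0 : Completion F) x = 0 := by
  rw [← Completion.coe_zero, hsmul_coe, zero_smul]

theorem hsmul_x_add (r : Completion F) (x y : N) :
    hsmul F r (x + y) = hsmul F r x + hsmul F r y := by
  refine Completion.induction_on r ?_ ?_
  · exact isClosed_eq (continuous_hsmul_left F (x + y))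
      ((continuous_hsmul_left F x).add (continuous_hsmul_left F y))
  · intro a
    rw [hsmul_coe, hsmul_coe, hsmul_coe, smul_add]

theorem hsmul_x_zero (r : Completion F) : hsmul F r (0 : N) = 0 := by
  refine Completion.induction_on r ?_ ?_
  · exact isClosed_eq (continuous_hsmul_left F (0:N)) continuous_const
  · intro a
    rw [hsmul_coe, smul_zero]

theorem hsmul_sub_r (r s : Completion F) (x : N) :
    hsmul F (r - s) x = hsmul F r x - hsmul F s x := by
  have := hsmul_add_r F (r - s) s x
  rw [sub_add_cancel] at this
  rw [this]
  abel

variable [CompletableTopField F]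

theorem mem_closure_coe_ball (s : Completion F) {δ : ℝ} (hs : ‖s‖ < δ) :
    s ∈ closure ((fun q : F => (q : Completion F)) '' Metric.ball (0 : F) δ) := by
  rw [mem_closure_iff_nhds]
  intro t ht
  have hopen : IsOpen (interior t ∩ Metric.ball (0 : Completion F) δ) :=
    isOpen_interior.inter Metric.isOpen_ball
  have hne : (interior t ∩ Metric.ball (0 : Completion F) δ).Nonempty :=
    ⟨s, mem_interior_iff_mem_nhds.2 ht, by simpa [mem_ball_zero_iff] using hs⟩
  obtain ⟨q, hq⟩ := Completion.denseRange_coe.exists_mem_open hopen hne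
  refine ⟨(q : Completion F), ⟨interior_subset hq.1, ⟨q, ?_, rfl⟩⟩⟩
  have := hq.2
  rw [mem_ball_zero_iff] at this ⊢
  rwa [Completion.norm_coe] at this

theorem hsmul_small {U : Set N} (hU : U ∈ 𝓝 (0 : N)) :
    ∃ δ > (0:ℝ), ∃ V ∈ 𝓝 (0 : N), ∀ s : Completion F, ‖s‖ < δ → ∀ x ∈ V, hsmul F s x ∈ U := by
  obtain ⟨U₀, hU₀, hU₀c, hU₀U⟩ := exists_mem_nhds_isClosed_subset hU
  have hc : Tendsto (fun p : F × N => p.1 • p.2) (𝓝 (0, 0)) (𝓝 (0 : N)) := by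
    have := continuous_smul.tendsto ((0 : F), (0 : N))
    simpa using this
  have hmem : (fun p : F × N => p.1 • p.2) ⁻¹' U₀ ∈ 𝓝 ((0 : F), (0 : N)) := hc hU₀
  rw [mem_nhds_prod_iff] at hmem
  obtain ⟨A, hA, B, hB, hAB⟩ := hmem
  obtain ⟨δ, δpos, hball⟩ := Metric.mem_nhds_iff.mp hA
  refine ⟨δ, δpos, B, hB, fun s hs x hx => ?_⟩
  have hcl : s ∈ closure ((fun q : F => (q : Completion F)) '' Metric.ball (0 : F) δ) :=
    mem_closure_coe_ball F s hs
  have hclosed : IsClosed {r : Completion F | hsmul F r x ∈ U₀} :=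
    hU₀c.preimage (continuous_hsmul_left F x)
  have hsub : (fun q : F => (q : Completion F)) '' Metric.ball (0 : F) δ ⊆
      {r : Completion F | hsmul F r x ∈ U₀} := by
    rintro _ ⟨q, hq, rfl⟩
    rw [mem_setOf_eq, hsmul_coe]
    exact hAB (mk_mem_prod (hball hq) hx)
  exact hU₀U (closure_minimal hsub hclosed hcl)

theorem tendsto_hsmul_right_zero (r : Completion F) :
    Tendsto (fun x : N => hsmul F r x) (𝓝 0) (𝓝 0) := by
  intro U hU
  rw [Filter.mem_map]
  obtain ⟨U₂, hU₂, hhalf⟩ := exists_nhds_zero_half hU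
  obtain ⟨δ, δpos, V, hV, hsmall⟩ := hsmul_small F hU₂
  obtain ⟨q, hq⟩ : ∃ q : F, ‖r - (q : Completion F)‖ < δ := by
    have hopen : IsOpen (Metric.ball r δ) := Metric.isOpen_ball
    obtain ⟨q, hq⟩ := Completion.denseRange_coe.exists_mem_open hopen ⟨r, by simp [δpos]⟩
    exact ⟨q, by rwa [Metric.mem_ball, dist_comm, dist_eq_norm] at hq⟩
  have hq' : Tendsto (fun x : N => q • x) (𝓝 0) (𝓝 0) := by
    have := (continuous_const_smul q).tendsto (0 : N)
    simpa using this
  have hmem : V ∩ (fun x : N => q • x) ⁻¹' U₂ ∈ 𝓝 (0 : N) := inter_mem hV (hq' hU₂)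
  refine mem_of_superset hmem ?_
  intro x hx
  have hdec : hsmul F r x = hsmul F (r - q) x + q • x := by
    rw [hsmul_sub_r, hsmul_coe]
    abel
  rw [mem_preimage, hdec]
  exact hhalf _ (hsmall _ hq _ hx.1) _ hx.2

theorem continuous_hsmul_right (r : Completion F) :
    Continuous (fun x : N => hsmul F r x) := by
  rw [continuous_iff_continuousAt]
  intro x₀
  have key : (fun x : N => hsmul F r x) =
      fun x => hsmul F r (x - x₀) + hsmul F r x₀ := by
    funext x
    rw [← hsmul_x_add]
    congr 1
    abel
  rw [ContinuousAt, key]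
  have h1 : Tendsto (fun x : N => x - x₀) (𝓝 x₀) (𝓝 0) := by
    have := (continuous_id.sub (continuous_const (y := x₀))).tendsto x₀
    simp only [Pi.sub_apply, sub_self, id_eq] at this; exact this
  have h2 := (tendsto_hsmul_right_zero F r).comp h1
  have h3 := h2.add (tendsto_const_nhds (x := hsmul F r x₀))
  simpa using h3

theorem hsmul_mul (r s : Completion F) (x : N) :
    hsmul F (r * s) x = hsmul F r (hsmul F s x) := by
  have claim1 : ∀ (b : F) (a : Completion F),
      hsmul F (a * (b : Completion F)) x = hsmul F a ((b : F) • x) := by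
    intro b a
    refine Completion.induction_on a ?_ ?_
    · exact isClosed_eq ((continuous_hsmul_left F x).comp (continuous_id.mul continuous_const))
        (continuous_hsmul_left F _)
    · intro p
      rw [← Completion.coe_mul, hsmul_coe, hsmul_coe, mul_smul]
  refine Completion.induction_on s ?_ ?_
  · refine isClosed_eq ?_ ?_
    · exact (continuous_hsmul_left F x).comp (continuous_const.mul continuous_id)
    · exact (continuous_hsmul_right F r).comp (continuous_hsmul_left F x)
  · intro b
    rw [hsmul_coe, claim1]

/-- The module structure over the completion. -/
def hatModule : Module (Completion F) N where
  smul := hsmul F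
  one_smul x := by
    show hsmul F 1 x = x
    rw [← Completion.coe_one, hsmul_coe, one_smul]
  mul_smul r s x := hsmul_mul F r s x
  smul_zero r := hsmul_x_zero F r
  smul_add r x y := hsmul_x_add F r x y
  add_smul r s x := hsmul_add_r F r s x
  zero_smul x := hsmul_zero_r F x

theorem hatModule_continuousSMul :
    letI := hatModule F (N := N)
    ContinuousSMul (Completion F) N := by
  letI := hatModule F (N := N)
  constructor
  rw [continuous_iff_continuousAt]
  rintro ⟨r₀, x₀⟩
  have hdecomp : ∀ p : Completion F × N, p.1 • p.2 =
      hsmul F (p.1 - r₀) (p.2 - x₀) + hsmul F (p.1 - r₀) x₀ +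
        (hsmul F r₀ (p.2 - x₀) + hsmul F r₀ x₀) := by
    rintro ⟨r, x⟩
    show hsmul F r x = _
    rw [← hsmul_x_add, ← hsmul_x_add, ← hsmul_add_r]
    congr 1 <;> abel
  have h1 : Tendsto (fun p : Completion F × N => hsmul F (p.1 - r₀) (p.2 - x₀))
      (𝓝 (r₀, x₀)) (𝓝 0) := by
    intro U hU
    obtain ⟨δ, δpos, V, hV, hsmall⟩ := hsmul_small F hU
    have e1 : ∀ᶠ p : Completion F × N in 𝓝 (r₀, x₀), ‖p.1 - r₀‖ < δ := by
      have hc : Tendsto (fun p : Completion F × N => p.1 - r₀) (𝓝 (r₀, x₀)) (𝓝 0) := by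
        have := (continuous_fst.sub (continuous_const (y := r₀))).tendsto (r₀, x₀)
        simp only [Pi.sub_apply, sub_self] at this; exact this
      have : {y : Completion F | ‖y‖ < δ} ∈ 𝓝 (0 : Completion F) := by
        have := Metric.ball_mem_nhds (0 : Completion F) δpos
        simpa [Metric.ball, dist_eq_norm] using this
      exact hc this
    have e2 : ∀ᶠ p : Completion F × N in 𝓝 (r₀, x₀), p.2 - x₀ ∈ V := by
      have hc : Tendsto (fun p : Completion F × N => p.2 - x₀) (𝓝 (r₀, x₀)) (𝓝 0) := by
        have := (continuous_snd.sub (continuous_const (y := x₀))).tendsto (r₀, x₀)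
        simp only [Pi.sub_apply, sub_self] at this; exact this
      exact hc hV
    rw [Filter.mem_map]
    filter_upwards [e1, e2] with p hp1 hp2
    exact hsmall _ hp1 _ hp2
  have h2 : Tendsto (fun p : Completion F × N => hsmul F (p.1 - r₀) x₀)
      (𝓝 (r₀, x₀)) (𝓝 0) := by
    have hc : Continuous fun p : Completion F × N => hsmul F (p.1 - r₀) x₀ :=
      (continuous_hsmul_left F x₀).comp (continuous_fst.sub continuous_const)
    have := hc.tendsto (r₀, x₀)
    simpa [hsmul_zero_r] using this
  have h3 : Tendsto (fun p : Completion F × N => hsmul F r₀ (p.2 - x₀))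
      (𝓝 (r₀, x₀)) (𝓝 0) := by
    have hc : Continuous fun p : Completion F × N => hsmul F r₀ (p.2 - x₀) :=
      (continuous_hsmul_right F r₀).comp (continuous_snd.sub continuous_const)
    have := hc.tendsto (r₀, x₀)
    simpa [hsmul_x_zero] using this
  have h4 : Tendsto (fun p : Completion F × N => hsmul F r₀ x₀) (𝓝 (r₀, x₀))
      (𝓝 (hsmul F r₀ x₀)) := tendsto_const_nhds
  have := ((h1.add h2).add (h3.add h4))
  rw [show ((0:N) + 0 + (0 + hsmul F r₀ x₀)) = hsmul F r₀ x₀ by abel] at this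
  have heq : (fun p : Completion F × N => p.1 • p.2) = fun p =>
      hsmul F (p.1 - r₀) (p.2 - x₀) + hsmul F (p.1 - r₀) x₀ +
        (hsmul F r₀ (p.2 - x₀) + hsmul F r₀ x₀) := funext hdecomp
  rw [ContinuousAt, heq]
  exact this

theorem hsmul_map {N' : Type*} [AddCommGroup N'] [Module F N'] [UniformSpace N']
    [IsUniformAddGroup N'] [ContinuousSMul F N'] [T2Space N'] [CompleteSpace N']
    (g : N →ₗ[F] N') (hg : Continuous g) (r : Completion F) (x : N) :
    g (hsmul F r x) = hsmul F r (g x) := by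
  refine Completion.induction_on r ?_ ?_
  · exact isClosed_eq (hg.comp (continuous_hsmul_left F x)) (continuous_hsmul_left F (g x))
  · intro q
    rw [hsmul_coe, hsmul_coe, map_smul]

end Hat


section Misc

theorem isComplete_of_isClosed_subset {X : Type*} [UniformSpace X] {s t : Set X}
    (hs : IsComplete s) (ht : IsClosed t) (hts : t ⊆ s) : IsComplete t := by
  intro l hl hlt
  obtain ⟨x, hxs, hx⟩ := hs l hl (le_trans hlt (Filter.principal_mono.2 hts))
  refine ⟨x, ?_, hx⟩
  haveI hne : l.NeBot := hl.1
  have hcp : ClusterPt x (𝓟 t) := Filter.neBot_of_le (le_inf hx hlt)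
  have hcl : x ∈ closure t := mem_closure_iff_clusterPt.mpr hcp
  rwa [ht.closure_eq] at hcl

theorem baireSpace_of_complete {G : Type*} [AddCommGroup G] [UniformSpace G] [IsUniformAddGroup G]
    [CompleteSpace G] [FirstCountableTopology G] : BaireSpace G := by
  haveI : (𝓤 G).IsCountablyGenerated := by
    rw [uniformity_eq_comap_nhds_zero]
    exact Filter.comap.isCountablyGenerated _ _
  letI := UniformSpace.pseudoMetricSpace G
  exact BaireSpace.of_completelyPseudoMetrizable

theorem not_isMeagre_univ {X : Type*} [TopologicalSpace X] [BaireSpace X] [Nonempty X] :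
    ¬ IsMeagre (univ : Set X) := by
  intro h
  rw [IsMeagre, compl_univ] at h
  exact Set.not_nonempty_empty (dense_of_mem_residual h).nonempty

theorem nonempty_interior_closure_of_not_isMeagre {X : Type*} [TopologicalSpace X] {s : Set X}
    (h : ¬ IsMeagre s) : (interior (closure s)).Nonempty := by
  rw [nonempty_iff_ne_empty]
  intro he
  apply h
  have hd : Dense (closure s)ᶜ := interior_eq_empty_iff_dense_compl.mp he
  have hres : (closure s)ᶜ ∈ residual X :=
    residual_of_dense_open isClosed_closure.isOpen_compl hd
  exact Filter.mem_of_superset hres (compl_subset_compl.2 subset_closure)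

end Misc

section BS

variable {E G : Type*}
  [AddCommGroup E] [Module F E] [UniformSpace E] [IsUniformAddGroup E] [ContinuousSMul F E]
  [CompleteSpace E] [FirstCountableTopology E]
  [AddCommGroup G] [Module F G] [UniformSpace G] [IsUniformAddGroup G] [ContinuousSMul F G]
  [T2Space G] [FirstCountableTopology G]

omit [CompletableTopField F] in
theorem exists_pow_smul_mem {M : Type*} [AddCommGroup M] [Module F M] [TopologicalSpace M]
    [ContinuousSMul F M] {t : F} (ht : 1 < ‖t‖) (x : M) {U : Set M} (hU : U ∈ 𝓝 (0:M)) :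
    ∃ k : ℕ, (t⁻¹) ^ k • x ∈ U := by
  have h1 : ‖t⁻¹‖ < 1 := by
    rw [norm_inv]
    exact inv_lt_one_of_one_lt₀ ht
  have h2 : Tendsto (fun k : ℕ => (t⁻¹) ^ k • x) atTop (𝓝 (0:M)) := by
    have := (tendsto_pow_atTop_nhds_zero_of_norm_lt_one h1).smul_const x
    simpa using this
  have h3 : ∀ᶠ k : ℕ in atTop, (t⁻¹) ^ k • x ∈ U := h2 hU
  exact h3.exists

omit [CompletableTopField F] [CompleteSpace E] [FirstCountableTopology E] [T2Space G]
  [FirstCountableTopology G] in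
theorem image_nonmeagre {f : E →ₗ[F] G} (hnm : ¬ IsMeagre (Set.range f)) {t : F} (ht : 1 < ‖t‖)
    {U : Set E} (hU : U ∈ 𝓝 (0:E)) : ¬ IsMeagre (f '' U) := by
  have htne : (t : F) ≠ 0 := norm_pos_iff.mp (lt_trans one_pos ht)
  intro hm
  apply hnm
  have hcover : Set.range f ⊆ ⋃ k : ℕ, (t ^ k) • (f '' U) := by
    rintro _ ⟨x, rfl⟩
    obtain ⟨k, hk⟩ := exists_pow_smul_mem (F := F) ht x hU
    refine mem_iUnion.2 ⟨k, ?_⟩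
    refine ⟨f ((t⁻¹) ^ k • x), mem_image_of_mem f hk, ?_⟩
    show t ^ k • f ((t⁻¹) ^ k • x) = f x
    rw [← map_smul, smul_smul, ← mul_pow, mul_inv_cancel₀ htne, one_pow, one_smul]
  have hme : IsMeagre (⋃ k : ℕ, (t ^ k) • (f '' U)) := by
    apply isMeagre_iUnion
    intro k
    have hne : (t : F) ^ k ≠ 0 := pow_ne_zero _ htne
    have heq : (t ^ k) • (f '' U) = (fun y : G => ((t ^ k)⁻¹ : F) • y) ⁻¹' (f '' U) := by
      ext y
      rw [mem_preimage, Set.mem_smul_set_iff_inv_smul_mem₀ hne]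
    rw [heq]
    exact hm.preimage_of_isOpenMap (continuous_const_smul _) (isOpenMap_smul₀ (inv_ne_zero hne))
  exact hme.mono hcover

omit [CompletableTopField F] [CompleteSpace E] [FirstCountableTopology E] [T2Space G]
  [FirstCountableTopology G] in
theorem zero_mem_int_closure_image {f : E →ₗ[F] G} (hnm : ¬ IsMeagre (Set.range f)) {t : F}
    (ht : 1 < ‖t‖) {U : Set E} (hU : U ∈ 𝓝 (0:E)) :
    (0:G) ∈ interior (closure (f '' U)) := by
  obtain ⟨V, hV, hVhalf⟩ := exists_nhds_zero_half hU
  have hVneg : (fun x : E => -x) ⁻¹' V ∈ 𝓝 (0:E) := by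
    have hc := (continuous_neg (G := E)).tendsto (0:E)
    rw [neg_zero] at hc
    exact hc hV
  have hV'mem : V ∩ (fun x : E => -x) ⁻¹' V ∈ 𝓝 (0:E) := inter_mem hV hVneg
  set V' := V ∩ (fun x : E => -x) ⁻¹' V with hV'def
  have hsub : ∀ a ∈ f '' V', ∀ b ∈ f '' V', a - b ∈ f '' U := by
    rintro _ ⟨v, hv, rfl⟩ _ ⟨w, hw, rfl⟩
    refine ⟨v + -w, hVhalf v hv.1 (-w) hw.2, ?_⟩
    rw [map_add, map_neg, sub_eq_add_neg]
  obtain ⟨y, hy⟩ := nonempty_interior_closure_of_not_isMeagre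
    (image_nonmeagre hnm ht hV'mem)
  have hO : IsOpen ((fun z : G => z - y) '' interior (closure (f '' V'))) :=
    ((Homeomorph.subRight y).isOpenMap) _ isOpen_interior
  have h0 : (0:G) ∈ (fun z : G => z - y) '' interior (closure (f '' V')) :=
    ⟨y, hy, by simp⟩
  have hOsub : (fun z : G => z - y) '' interior (closure (f '' V')) ⊆ closure (f '' U) := by
    rintro _ ⟨z, hz, rfl⟩
    exact map_mem_closure₂ continuous_sub (interior_subset hz) (interior_subset hy) hsub
  exact interior_maximal hOsub hO h0

omit [CompletableTopField F] in
theorem bs_key {f : E →ₗ[F] G} (hf : Continuous f) (hnm : ¬ IsMeagre (Set.range f))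
    {U : Set E} (hU : U ∈ 𝓝 (0:E)) : f '' U ∈ 𝓝 (0:G) := by
  obtain ⟨t, ht⟩ := NormedField.exists_one_lt_norm F
  obtain ⟨BG, hBG⟩ := (𝓝 (0:G)).exists_antitone_basis
  obtain ⟨BE, hBE⟩ := (𝓝 (0:E)).exists_antitone_basis
  obtain ⟨U₀, hU₀mem, hU₀c, hU₀U⟩ := exists_mem_nhds_isClosed_subset hU
  have hftendsto : Tendsto f (𝓝 0) (𝓝 (0:G)) := by
    have := hf.tendsto (0:E)
    rwa [map_zero] at this
  have step : ∀ (k : ℕ) (A : Set E), A ∈ 𝓝 (0:E) → ∃ Bs : Set E, Bs ∈ 𝓝 (0:E) ∧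
      (∀ v ∈ Bs, ∀ w ∈ Bs, v + w ∈ A) ∧ Bs ⊆ f ⁻¹' (BG k) ∧ Bs ⊆ BE k := by
    intro k A hA
    obtain ⟨V, hV, hVhalf⟩ := exists_nhds_zero_half hA
    have hf0 : f ⁻¹' (BG k) ∈ 𝓝 (0:E) := hftendsto (hBG.1.mem_of_mem trivial)
    refine ⟨V ∩ (f ⁻¹' (BG k) ∩ BE k),
      inter_mem hV (inter_mem hf0 (hBE.1.mem_of_mem trivial)), ?_, ?_, ?_⟩
    · intro v hv w hw
      exact hVhalf v hv.1 w hw.1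
    · exact fun x hx => hx.2.1
    · exact fun x hx => hx.2.2
  choose st hst1 hst2 hst3 hst4 using step
  let u : ℕ → {s : Set E // s ∈ 𝓝 (0:E)} := fun k =>
    Nat.rec ⟨U₀, hU₀mem⟩ (fun k p => ⟨st k p.1 p.2, hst1 k p.1 p.2⟩) k
  have huS : ∀ k, (u (k+1)).1 = st k (u k).1 (u k).2 := fun _ => rfl
  have hadd : ∀ k, ∀ v ∈ (u (k+1)).1, ∀ w ∈ (u (k+1)).1, v + w ∈ (u k).1 := by
    intro k
    rw [huS k]
    exact hst2 k _ _
  have hBGsub : ∀ k, (u (k+1)).1 ⊆ f ⁻¹' (BG k) := fun k => by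
    rw [huS k]; exact hst3 _ _ _
  have hBEsub : ∀ k, (u (k+1)).1 ⊆ BE k := fun k => by
    rw [huS k]; exact hst4 _ _ _
  have hmono : ∀ k, (u (k+1)).1 ⊆ (u k).1 := by
    intro k x hx
    have := hadd k x hx 0 (mem_of_mem_nhds (u (k+1)).2)
    simpa using this
  have hchain : ∀ a b : ℕ, a ≤ b → (u b).1 ⊆ (u a).1 := by
    intro a b hab
    induction hab with
    | refl => exact subset_rfl
    | step _ ih => exact (hmono _).trans ih
  have hmain : closure (f '' (u 1).1) ⊆ f '' (u 0).1 := by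
    intro y hy
    have step2 : ∀ (k : ℕ) (σ : E), y - f σ ∈ closure (f '' (u (k+1)).1) →
        ∃ x : E, x ∈ (u (k+1)).1 ∧ y - f (σ + x) ∈ closure (f '' (u (k+2)).1) := by
      intro k σ hσ
      have h0 : (0:G) ∈ interior (closure (f '' (u (k+2)).1)) :=
        zero_mem_int_closure_image hnm ht (u (k+2)).2
      have hO : IsOpen ((fun z : G => (y - f σ) - z) ''
          interior (closure (f '' (u (k+2)).1))) :=
        (Homeomorph.subLeft (y - f σ)).isOpenMap _ isOpen_interior
      have hOy : (y - f σ) ∈ (fun z : G => (y - f σ) - z) ''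
          interior (closure (f '' (u (k+2)).1)) := ⟨0, h0, by simp⟩
      obtain ⟨p, hpO, hpim⟩ := mem_closure_iff_nhds.mp hσ _ (hO.mem_nhds hOy)
      obtain ⟨x, hxU, hfx⟩ := hpim
      obtain ⟨n, hn, hne⟩ := hpO
      refine ⟨x, hxU, ?_⟩
      have hfx' : f x = p := hfx
      have hne' : (y - f σ) - n = p := hne
      have heq : y - f (σ + x) = n := by
        rw [map_add, hfx', ← hne']
        abel
      rw [heq]
      exact interior_subset hn
    let T : (k : ℕ) → {σ : E // y - f σ ∈ closure (f '' (u (k+1)).1)} := fun k =>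
      Nat.rec ⟨0, by simpa using hy⟩
        (fun k p => ⟨p.1 + (step2 k p.1 p.2).choose, (step2 k p.1 p.2).choose_spec.2⟩) k
    set σ : ℕ → E := fun k => (T k).1 with hσdef
    have hσ0 : σ 0 = 0 := rfl
    have hTs : ∀ k, σ (k+1) - σ k ∈ (u (k+1)).1 := by
      intro k
      have heq : σ (k+1) = σ k + (step2 k (T k).1 (T k).2).choose := rfl
      rw [heq]
      have h := (step2 k (T k).1 (T k).2).choose_spec.1
      simpa using h
    have hdiff : ∀ m j, σ (j + m + 1) - σ j ∈ (u j).1 := by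
      intro m
      induction m with
      | zero => exact fun j => hmono j (hTs j)
      | succ m ih =>
        intro j
        have e : σ (j + (m+1) + 1) - σ j =
            (σ (j+1) - σ j) + (σ ((j+1) + m + 1) - σ (j+1)) := by
          rw [show j + (m+1) + 1 = (j+1) + m + 1 from by omega]
          abel
        rw [e]
        exact hadd j _ (hTs j) _ (ih (j+1))
    have hdiff' : ∀ j k, j ≤ k → σ k - σ j ∈ (u j).1 ∨ σ k = σ j := by
      intro j k hjk
      rcases Nat.eq_or_lt_of_le hjk with h | h
      · right; rw [h]
      · left
        obtain ⟨m, rfl⟩ : ∃ m, k = j + m + 1 := ⟨k - j - 1, by omega⟩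
        exact hdiff m j
    have hσmem : ∀ k, σ k ∈ (u 0).1 := by
      intro k
      rcases hdiff' 0 k (Nat.zero_le k) with h | h
      · rw [hσ0, sub_zero] at h
        exact h
      · rw [h, hσ0]
        exact mem_of_mem_nhds (u 0).2
    have hcauchy : CauchySeq σ := by
      refine ⟨Filter.map_neBot, ?_⟩
      rw [prod_map_map_eq, uniformity_eq_comap_nhds_zero E, ← Filter.map_le_iff_le_comap,
        Filter.map_map]
      intro M hM
      have hMneg : (fun x : E => -x) ⁻¹' M ∈ 𝓝 (0:E) := by
        have hc := (continuous_neg (G := E)).tendsto (0:E)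
        rw [neg_zero] at hc
        exact hc hM
      obtain ⟨j₀, hj₀⟩ := hBE.1.mem_iff.mp (inter_mem hM hMneg)
      rw [Filter.mem_map]
      have hset : Set.Ici (j₀+1) ×ˢ Set.Ici (j₀+1) ∈ (atTop ×ˢ atTop : Filter (ℕ × ℕ)) :=
        Filter.prod_mem_prod (Ici_mem_atTop _) (Ici_mem_atTop _)
      refine mem_of_superset hset ?_
      rintro ⟨j, k⟩ ⟨hj, hk⟩
      simp only [mem_preimage, Function.comp]
      rw [mem_Ici] at hj hk
      have huM : (u (j₀+1)).1 ⊆ M ∩ (fun x : E => -x) ⁻¹' M :=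
        (hBEsub j₀).trans hj₀.2
      rcases le_total j k with hjk | hkj
      · rcases hdiff' j k hjk with h | h
        · exact (huM (hchain _ _ hj h)).1
        · rw [h, sub_self]
          exact mem_of_mem_nhds hM
      · rcases hdiff' k j hkj with h | h
        · have := (huM (hchain _ _ hk h)).2
          simpa using this
        · rw [← h, sub_self]
          exact mem_of_mem_nhds hM
    obtain ⟨x, hx⟩ := cauchySeq_tendsto_of_complete hcauchy
    have hxU0 : x ∈ (u 0).1 :=
      hU₀c.mem_of_tendsto hx (Filter.Eventually.of_forall hσmem)
    refine ⟨x, hxU0, ?_⟩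
    have h1 : Tendsto (fun k => f (σ k)) atTop (𝓝 (f x)) := (hf.tendsto x).comp hx
    have h3 : Tendsto (fun k => y - f (σ k)) atTop (𝓝 (0:G)) := by
      intro M hM
      obtain ⟨M₀, hM₀mem, hM₀c, hM₀sub⟩ := exists_mem_nhds_isClosed_subset hM
      obtain ⟨k₀, hk₀⟩ := hBG.1.mem_iff.mp hM₀mem
      rw [Filter.mem_map]
      refine mem_of_superset (Ici_mem_atTop k₀) ?_
      intro k hk
      rw [mem_Ici] at hk
      have hyk : y - f (σ k) ∈ closure (f '' (u (k+1)).1) := (T k).2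
      have hsub1 : f '' (u (k+1)).1 ⊆ BG k := by
        rw [image_subset_iff]
        exact hBGsub k
      have hsub2 : BG k ⊆ M₀ := (hBG.2 hk).trans hk₀.2
      have : y - f (σ k) ∈ closure M₀ := closure_mono (hsub1.trans hsub2) hyk
      rw [hM₀c.closure_eq] at this
      exact mem_preimage.2 (hM₀sub this)
    have h2 : Tendsto (fun k => f (σ k)) atTop (𝓝 y) := by
      have := (tendsto_const_nhds : Tendsto (fun _ : ℕ => y) atTop (𝓝 y)).sub h3
      simpa using this
    have hfx : f x = y := tendsto_nhds_unique h1 h2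
    rw [hfx]
  have h0 : (0:G) ∈ interior (closure (f '' (u 1).1)) :=
    zero_mem_int_closure_image hnm ht (u 1).2
  have hcl : closure (f '' (u 1).1) ∈ 𝓝 (0:G) :=
    mem_of_superset (isOpen_interior.mem_nhds h0) interior_subset
  have hsub : f '' (u 0).1 ⊆ f '' U := image_mono hU₀U
  exact mem_of_superset hcl (hmain.trans hsub)

omit [CompletableTopField F] in
theorem bs_isOpenMap_surjective {f : E →ₗ[F] G} (hf : Continuous f)
    (hnm : ¬ IsMeagre (Set.range f)) : IsOpenMap f ∧ Surjective f := by
  constructor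
  · intro A hA
    rw [isOpen_iff_mem_nhds]
    rintro _ ⟨a, ha, rfl⟩
    have hc : Tendsto (fun x : E => a + x) (𝓝 0) (𝓝 a) := by
      have := ((continuous_const (y := a)).add continuous_id).tendsto (0:E)
      simp only [Pi.add_apply, add_zero, id_eq] at this; exact this
    have hA0 : (fun x : E => a + x) ⁻¹' A ∈ 𝓝 (0:E) := hc (hA.mem_nhds ha)
    have himg := bs_key hf hnm hA0
    have hc2 : Tendsto (fun y : G => y - f a) (𝓝 (f a)) (𝓝 0) := by
      have := (continuous_id.sub (continuous_const (y := f a))).tendsto (f a)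
      simp only [Pi.sub_apply, sub_self, id_eq] at this; exact this
    have hmem : (fun y : G => y - f a) ⁻¹' (f '' ((fun x : E => a + x) ⁻¹' A)) ∈ 𝓝 (f a) :=
      hc2 himg
    refine mem_of_superset hmem ?_
    intro y hy
    obtain ⟨x, hxA, hfx⟩ := hy
    have hfx' : f x = y - f a := hfx
    refine ⟨a + x, hxA, ?_⟩
    rw [map_add, hfx']
    abel
  · intro y
    obtain ⟨t, ht⟩ := NormedField.exists_one_lt_norm F
    have htne : (t : F) ≠ 0 := norm_pos_iff.mp (lt_trans one_pos ht)
    have hrange : Set.range f ∈ 𝓝 (0:G) := by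
      have := bs_key hf hnm (univ_mem (α := E))
      simpa [image_univ] using this
    obtain ⟨k, x, hx⟩ := exists_pow_smul_mem (F := F) ht y hrange
    refine ⟨t ^ k • x, ?_⟩
    rw [map_smul, hx, smul_smul, ← mul_pow, mul_inv_cancel₀ htne, one_pow, one_smul]

end BS

end Statement8



noncomputable section

namespace Statement8

variable {F : Type*} [NontriviallyNormedField F]

instance submodUAG {W' : Type*} [AddCommGroup W'] [UniformSpace W'] [IsUniformAddGroup W']
    {R' : Type*} [Ring R'] [Module R' W'] (s : Submodule R' W') : IsUniformAddGroup s :=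
  s.toAddSubgroup.isUniformAddGroup

theorem metrizable_of_le {W : Type*} [AddCommGroup W] [Module F W] [TopologicalSpace W]
    {s t : Submodule F W} (hst : s ≤ t) (h : TopologicalSpace.MetrizableSpace t) :
    TopologicalSpace.MetrizableSpace s := by
  have hcomp : (Subtype.val : t → W) ∘ (fun x : s => (⟨x.1, hst x.2⟩ : t)) =
      (Subtype.val : s → W) := rfl
  have hemb : Topology.IsEmbedding (fun x : s => (⟨x.1, hst x.2⟩ : t)) := by
    refine Topology.IsEmbedding.of_comp (Continuous.subtype_mk continuous_subtype_val _)
      continuous_subtype_val ?_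
    rw [hcomp]
    exact Topology.IsEmbedding.subtypeVal
  exact @Topology.IsEmbedding.metrizableSpace _ _ _ _ h _ hemb

variable {V W : Type*}
  [AddCommGroup V] [Module F V] [UniformSpace V] [IsUniformAddGroup V] [ContinuousSMul F V]
  [T2Space V]
  [AddCommGroup W] [Module F W] [UniformSpace W] [IsUniformAddGroup W] [ContinuousSMul F W]
  [T2Space W]

theorem exists_complement [CompletableTopField F]
    (Wn : ℕ → Submodule F W) (hWmono : Monotone Wn)
    (hWunion : ∀ w : W, ∃ n, w ∈ Wn n)
    (hWcomplete : ∀ n, IsComplete (Wn n : Set W))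
    (Vn : ℕ → Submodule F V)
    (hVunion : ∀ v : V, ∃ n, v ∈ Vn n)
    (hVcomplete : ∀ n, IsComplete (Vn n : Set V))
    (α : V →L[F] W) (R : Submodule F W)
    (hR : (R : Set W) = Set.range α)
    (hcoker : FiniteDimensional F (W ⧸ R)) :
    ∃ (m0 : ℕ) (C : Submodule F W), IsComplete (C : Set W) ∧ (C : Set W) ⊆ (Wn m0 : Set W) ∧
      (∀ w ∈ C, w ∈ R → w = (0:W)) ∧ (∀ w : W, ∃ c ∈ C, w - c ∈ R) := by
  classical
  have hWcS : ∀ n, CompleteSpace (Wn n) := fun n => (hWcomplete n).completeSpace_coe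
  have hVcS : ∀ n, CompleteSpace (Vn n) := fun n => (hVcomplete n).completeSpace_coe
  -- the piecewise completed scalar action
  let psm : ∀ n : ℕ, Completion F → Wn n → Wn n := fun n =>
    haveI := hWcS n
    hsmul F
  let psv : ∀ n : ℕ, Completion F → Vn n → Vn n := fun n =>
    haveI := hVcS n
    hsmul F
  have psm_coe : ∀ n (q : F) (x : Wn n), psm n (q : Completion F) x = q • x := fun n q x => by
    haveI := hWcS n; exact hsmul_coe F q x
  have psv_coe : ∀ n (q : F) (x : Vn n), psv n (q : Completion F) x = q • x := fun n q x => by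
    haveI := hVcS n; exact hsmul_coe F q x
  have psm_cont : ∀ n (x : Wn n), Continuous (fun r => psm n r x) := fun n x => by
    haveI := hWcS n; exact continuous_hsmul_left F x
  have psv_cont : ∀ n (x : Vn n), Continuous (fun r => psv n r x) := fun n x => by
    haveI := hVcS n; exact continuous_hsmul_left F x
  have psm_mul : ∀ n r s (x : Wn n), psm n (r * s) x = psm n r (psm n s x) := fun n r s x => by
    haveI := hWcS n; exact hsmul_mul F r s x
  have psm_addr : ∀ n r s (x : Wn n), psm n (r + s) x = psm n r x + psm n s x := fun n r s x => by
    haveI := hWcS n; exact hsmul_add_r F r s x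
  have psm_addx : ∀ n r (x y : Wn n), psm n r (x + y) = psm n r x + psm n r y := fun n r x y => by
    haveI := hWcS n; exact hsmul_x_add F r x y
  have psm_zero : ∀ n r, psm n r (0 : Wn n) = 0 := fun n r => by
    haveI := hWcS n; exact hsmul_x_zero F r
  have psm_zeror : ∀ n (x : Wn n), psm n (0 : Completion F) x = 0 := fun n x => by
    haveI := hWcS n; exact hsmul_zero_r F x
  have incl_cont : ∀ {m k : ℕ} (hmk : Wn m ≤ Wn k),
      Continuous (Submodule.inclusion hmk : Wn m →ₗ[F] Wn k) := by
    intro m k hmk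
    have : ⇑(Submodule.inclusion hmk : Wn m →ₗ[F] Wn k) =
        fun x : Wn m => (⟨x.1, hmk x.2⟩ : Wn k) := by
      funext x
      exact Subtype.ext rfl
    rw [this]
    exact Continuous.subtype_mk continuous_subtype_val _
  have psm_map : ∀ {m k : ℕ} (hmk : Wn m ≤ Wn k) (r : Completion F) (x : Wn m),
      Submodule.inclusion hmk (psm m r x) = psm k r (Submodule.inclusion hmk x) := by
    intro m k hmk r x
    haveI := hWcS m; haveI := hWcS k
    exact hsmul_map F (Submodule.inclusion hmk) (incl_cont hmk) r x
  let pick : W → ℕ := fun w => (hWunion w).choose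
  have hpick : ∀ w, w ∈ Wn (pick w) := fun w => (hWunion w).choose_spec
  let wsm : Completion F → W → W := fun r w => ((psm (pick w) r ⟨w, hpick w⟩ : Wn (pick w)) : W)
  have wsm_eq : ∀ (n : ℕ) (w : W) (hw : w ∈ Wn n) (r : Completion F),
      wsm r w = ((psm n r ⟨w, hw⟩ : Wn n) : W) := by
    intro n w hw r
    have h1 : Wn (pick w) ≤ Wn (max n (pick w)) := hWmono (le_max_right _ _)
    have h2 : Wn n ≤ Wn (max n (pick w)) := hWmono (le_max_left _ _)
    have e1 := psm_map h1 r ⟨w, hpick w⟩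
    have e2 := psm_map h2 r ⟨w, hw⟩
    have e3 : Submodule.inclusion h1 (⟨w, hpick w⟩ : Wn (pick w)) =
        Submodule.inclusion h2 (⟨w, hw⟩ : Wn n) := by
      apply Subtype.ext
      rw [Submodule.coe_inclusion, Submodule.coe_inclusion]
    have e4 : ((psm (pick w) r ⟨w, hpick w⟩ : Wn (pick w)) : W) =
        ((Submodule.inclusion h1 (psm (pick w) r ⟨w, hpick w⟩) : Wn (max n (pick w))) : W) :=
      (Submodule.coe_inclusion _ _).symm
    have e5 : ((psm n r ⟨w, hw⟩ : Wn n) : W) =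
        ((Submodule.inclusion h2 (psm n r ⟨w, hw⟩) : Wn (max n (pick w))) : W) :=
      (Submodule.coe_inclusion _ _).symm
    show ((psm (pick w) r ⟨w, hpick w⟩ : Wn (pick w)) : W) = _
    rw [e4, e1, e3, ← e2, ← e5]
  have wsm_coe : ∀ (q : F) (w : W), wsm (q : Completion F) w = q • w := by
    intro q w
    show ((psm (pick w) (q : Completion F) ⟨w, hpick w⟩ : Wn (pick w)) : W) = q • w
    rw [psm_coe]
    rfl
  have wsm_cont : ∀ w : W, Continuous (fun r => wsm r w) := by
    intro w
    exact continuous_subtype_val.comp (psm_cont (pick w) ⟨w, hpick w⟩)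
  -- stability of R under the completed action
  have hRsmul : ∀ (r : Completion F) (w : W), w ∈ R → wsm r w ∈ R := by
    intro r w hw
    have hw' : w ∈ Set.range α := by rw [← hR]; exact hw
    obtain ⟨v, hv⟩ := hw'
    obtain ⟨j, hj⟩ := hVunion v
    have key : ∀ r : Completion F, wsm r w = α ((psv j r ⟨v, hj⟩ : Vn j) : V) := by
      intro r
      refine Completion.induction_on r ?_ ?_
      · exact isClosed_eq (wsm_cont w)
          (α.continuous.comp (continuous_subtype_val.comp (psv_cont j ⟨v, hj⟩)))
      · intro q
        rw [wsm_coe, psv_coe]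
        have : (((q • ⟨v, hj⟩ : Vn j) : Vn j) : V) = q • v := rfl
        rw [this, map_smul, hv]
    have hmem : wsm r w ∈ Set.range ⇑α := ⟨_, (key r).symm⟩
    have hmem' : wsm r w ∈ (R : Set W) := by rw [hR]; exact hmem
    exact hmem'
  -- the module structure over the completion on all of W
  letI wMod : Module (Completion F) W :=
    { smul := wsm
      one_smul := fun w => by
        show wsm 1 w = w
        rw [show (1 : Completion F) = ((1 : F) : Completion F) from (Completion.coe_one F).symm,
          wsm_coe, one_smul]
      mul_smul := fun r s w => by
        show wsm (r * s) w = wsm r (wsm s w)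
        have h1 : wsm s w = ((psm (pick w) s ⟨w, hpick w⟩ : Wn (pick w)) : W) := rfl
        have hmem : wsm s w ∈ Wn (pick w) := by
          rw [h1]; exact (psm (pick w) s ⟨w, hpick w⟩).2
        rw [wsm_eq (pick w) w (hpick w), wsm_eq (pick w) (wsm s w) hmem, psm_mul]
      smul_zero := fun r => by
        show wsm r 0 = 0
        rw [wsm_eq 0 0 (Wn 0).zero_mem]
        have : (⟨(0:W), (Wn 0).zero_mem⟩ : Wn 0) = 0 := rfl
        rw [this, psm_zero]
        rfl
      smul_add := fun r w w' => by
        show wsm r (w + w') = wsm r w + wsm r w'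
        obtain ⟨n1, h1⟩ := hWunion w
        obtain ⟨n2, h2⟩ := hWunion w'
        have hw : w ∈ Wn (max n1 n2) := hWmono (le_max_left _ _) h1
        have hw' : w' ∈ Wn (max n1 n2) := hWmono (le_max_right _ _) h2
        rw [wsm_eq _ w hw, wsm_eq _ w' hw', wsm_eq _ (w + w') ((Wn _).add_mem hw hw')]
        have : (⟨w + w', (Wn _).add_mem hw hw'⟩ : Wn (max n1 n2)) =
            ⟨w, hw⟩ + ⟨w', hw'⟩ := rfl
        rw [this, psm_addx]
        rfl
      add_smul := fun r s w => by
        show wsm (r + s) w = wsm r w + wsm s w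
        rw [wsm_eq (pick w) w (hpick w) r, wsm_eq (pick w) w (hpick w) s,
          wsm_eq (pick w) w (hpick w) (r + s), psm_addr]
        rfl
      zero_smul := fun w => by
        show wsm 0 w = 0
        rw [wsm_eq (pick w) w (hpick w), psm_zeror]
        rfl }
  have smul_def : ∀ (r : Completion F) (w : W), r • w = wsm r w := fun _ _ => rfl
  -- R as a submodule over the completion
  let Rhat : Submodule (Completion F) W :=
    { carrier := (R : Set W)
      add_mem' := fun hx hy => R.add_mem hx hy
      zero_mem' := R.zero_mem
      smul_mem' := fun r {x} hx => hRsmul r x hx }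
  have memRhat : ∀ {w : W}, w ∈ Rhat ↔ w ∈ R := fun {w} => Iff.rfl
  -- the quotient is finite dimensional over the completion
  have mkhat_smulF : ∀ (q : F) (u : W),
      (Submodule.Quotient.mk (q • u) : W ⧸ Rhat) = (q : Completion F) • Submodule.Quotient.mk u := by
    intro q u
    rw [← wsm_coe q u, ← smul_def, ← Submodule.Quotient.mk_smul]
  haveI hQfin : Module.Finite (Completion F) (W ⧸ Rhat) := by
    obtain ⟨S, hS⟩ := hcoker.fg_top
    let pre : (W ⧸ R) → W := fun q => (Submodule.Quotient.mk_surjective R q).choose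
    have hpre : ∀ q, (Submodule.Quotient.mk (pre q) : W ⧸ R) = q :=
      fun q => (Submodule.Quotient.mk_surjective R q).choose_spec
    set T : Set W := pre '' ↑S with hTdef
    have hTfin : T.Finite := S.finite_toSet.image _
    refine ⟨Submodule.fg_def.mpr ⟨(fun u => (Submodule.Quotient.mk u : W ⧸ Rhat)) '' T,
      hTfin.image _, ?_⟩⟩
    rw [eq_top_iff]
    rintro q -
    obtain ⟨w, rfl⟩ := Submodule.Quotient.mk_surjective Rhat q
    have himg : (fun u => (Submodule.Quotient.mk u : W ⧸ R)) '' T = ↑S := by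
      rw [hTdef, Set.image_image]
      have hcg : ∀ x ∈ (S : Set (W ⧸ R)), (Submodule.Quotient.mk (pre x) : W ⧸ R) = x :=
        fun x _ => hpre x
      rw [Set.image_congr hcg, Set.image_id']
    have hfn : (fun u => (Submodule.Quotient.mk u : W ⧸ R)) = ⇑R.mkQ :=
      funext fun u => (R.mkQ_apply u).symm
    have h1 : (R.mkQ w : W ⧸ R) ∈ Submodule.map R.mkQ (Submodule.span F T) := by
      rw [← Submodule.span_image R.mkQ, ← hfn, himg, hS]
      exact Submodule.mem_top
    obtain ⟨u, hu, huw⟩ := Submodule.mem_map.mp h1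
    have hwu : u - w ∈ R := by
      rw [← Submodule.Quotient.eq R]
      rw [R.mkQ_apply, R.mkQ_apply] at huw
      exact huw
    have hmk : (Submodule.Quotient.mk u : W ⧸ Rhat) = Submodule.Quotient.mk w :=
      (Submodule.Quotient.eq Rhat).mpr hwu
    rw [← hmk]
    have hind : ∀ u, u ∈ Submodule.span F T → (Submodule.Quotient.mk u : W ⧸ Rhat) ∈
        Submodule.span (Completion F) ((fun u => (Submodule.Quotient.mk u : W ⧸ Rhat)) '' T) := by
      intro x hx
      induction hx using Submodule.span_induction with
      | mem y hy => exact Submodule.subset_span ⟨y, hy, rfl⟩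
      | zero =>
        rw [Submodule.Quotient.mk_zero]
        exact Submodule.zero_mem _
      | add y z hy hz ihy ihz =>
        rw [Submodule.Quotient.mk_add]
        exact Submodule.add_mem _ ihy ihz
      | smul q y hy ih =>
        rw [mkhat_smulF]
        exact Submodule.smul_mem _ _ ih
    exact hind u hu
  -- choose a basis of the quotient and lift it
  haveI hQfd : FiniteDimensional (Completion F) (W ⧸ Rhat) := hQfin
  let B := Module.finBasis (Completion F) (W ⧸ Rhat)
  set d := Module.finrank (Completion F) (W ⧸ Rhat) with hd
  let ℓ : Fin d → W := fun i => (Submodule.Quotient.mk_surjective Rhat (B i)).choose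
  have hℓ : ∀ i, (Submodule.Quotient.mk (ℓ i) : W ⧸ Rhat) = B i :=
    fun i => (Submodule.Quotient.mk_surjective Rhat (B i)).choose_spec
  let m0 : ℕ := Finset.univ.sup fun i : Fin d => pick (ℓ i)
  have hℓm : ∀ i, ℓ i ∈ Wn m0 := fun i =>
    hWmono (Finset.le_sup (Finset.mem_univ i)) (hpick (ℓ i))
  let C : Submodule F W := (Submodule.span F (Set.range ℓ)).topologicalClosure
  have hCsub : (C : Set W) ⊆ (Wn m0 : Set W) := by
    have hle : (Submodule.span F (Set.range ℓ)).topologicalClosure ≤ Wn m0 :=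
      Submodule.topologicalClosure_minimal _
        (Submodule.span_le.mpr (by rintro _ ⟨i, rfl⟩; exact hℓm i)) (hWcomplete m0).isClosed
    exact fun x hx => hle hx
  have hCc : IsComplete (C : Set W) :=
    isComplete_of_isClosed_subset (hWcomplete m0) (Submodule.isClosed_topologicalClosure _) hCsub
  have hCsm : ∀ (r : Completion F) (w : W), w ∈ C → wsm r w ∈ C := by
    intro r w hw
    refine Completion.induction_on r ?_ ?_
    · exact (Submodule.isClosed_topologicalClosure _).preimage (wsm_cont w)
    · intro q
      rw [wsm_coe]
      exact C.smul_mem q hw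
  -- work inside the complete piece Wn m0
  haveI := hWcS m0
  letI nMod : Module (Completion F) (Wn m0) := hatModule F
  haveI ncs : ContinuousSMul (Completion F) (Wn m0) := hatModule_continuousSMul F
  let ℓ' : Fin d → Wn m0 := fun i => ⟨ℓ i, hℓm i⟩
  let D : Submodule (Completion F) (Wn m0) := Submodule.span (Completion F) (Set.range ℓ')
  haveI hDfin : FiniteDimensional (Completion F) D :=
    FiniteDimensional.span_of_finite _ (Set.finite_range ℓ')
  have hDclosed : IsClosed (D : Set (Wn m0)) := Submodule.closed_of_finiteDimensional D
  have hDim : IsClosed (Subtype.val '' (D : Set (Wn m0)) : Set W) :=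
    ((hWcomplete m0).isClosed.isClosedEmbedding_subtypeVal.isClosedMap) _ hDclosed
  have hvalsm : ∀ (r : Completion F) (x : Wn m0), ((hsmul F r x : Wn m0) : W) = wsm r (x : W) :=
    fun r x => (wsm_eq m0 (x : W) x.2 r).symm
  have hsmulD : ∀ (r : Completion F) (x : Wn m0), r • x = hsmul F r x := fun _ _ => rfl
  have hCD : (C : Set W) ⊆ Subtype.val '' (D : Set (Wn m0)) := by
    have hspan : (Submodule.span F (Set.range ℓ) : Set W) ⊆
        Subtype.val '' (D : Set (Wn m0)) := by
      intro w hw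
      induction hw using Submodule.span_induction with
      | mem x hx =>
        obtain ⟨i, rfl⟩ := hx
        exact ⟨ℓ' i, Submodule.subset_span ⟨i, rfl⟩, rfl⟩
      | zero => exact ⟨0, D.zero_mem, rfl⟩
      | add x y hx hy ihx ihy =>
        obtain ⟨a, ha, hav⟩ := ihx
        obtain ⟨b, hb, hbv⟩ := ihy
        exact ⟨a + b, D.add_mem ha hb, by rw [Submodule.coe_add, hav, hbv]⟩
      | smul q x hx ih =>
        obtain ⟨a, ha, hav⟩ := ih
        refine ⟨(q : Completion F) • a, D.smul_mem _ ha, ?_⟩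
        rw [hsmulD, hsmul_coe]
        rw [Submodule.coe_smul, hav]
    have hCcl : (C : Set W) = closure ((Submodule.span F (Set.range ℓ) : Submodule F W) : Set W) :=
      rfl
    rw [hCcl]
    exact closure_minimal hspan hDim
  have hdisj : ∀ w ∈ C, w ∈ R → w = 0 := by
    intro w hwC hwR
    obtain ⟨x, hxD, hxw⟩ := hCD hwC
    obtain ⟨c, hc⟩ := (Submodule.mem_span_range_iff_exists_fun (Completion F)).mp hxD
    have hw : w = ∑ i, wsm (c i) (ℓ i) := by
      rw [← hxw, ← hc, Submodule.coe_sum]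
      refine Finset.sum_congr rfl fun i _ => ?_
      rw [hsmulD, hvalsm]
    have h0 : (Submodule.Quotient.mk w : W ⧸ Rhat) = 0 :=
      (Submodule.Quotient.mk_eq_zero _).mpr hwR
    have hq : (0 : W ⧸ Rhat) = ∑ i, c i • B i := by
      rw [← h0, hw]
      have : (Submodule.Quotient.mk (∑ i, wsm (c i) (ℓ i)) : W ⧸ Rhat) =
          ∑ i, Rhat.mkQ (wsm (c i) (ℓ i)) := by
        rw [← map_sum]
        rfl
      rw [this]
      refine Finset.sum_congr rfl fun i _ => ?_
      rw [← smul_def, map_smul, Rhat.mkQ_apply, hℓ]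
    have hc0 : ∀ i, c i = 0 := by
      have hli := B.linearIndependent
      rw [Fintype.linearIndependent_iff] at hli
      exact hli c (by rw [← hq])
    rw [hw]
    refine Finset.sum_eq_zero fun i _ => ?_
    rw [hc0 i, ← smul_def, zero_smul]
  have hspan2 : ∀ w : W, ∃ c ∈ C, w - c ∈ R := by
    intro w
    set q := (Submodule.Quotient.mk w : W ⧸ Rhat) with hqdef
    set u : W := ∑ i, wsm (B.repr q i) (ℓ i) with hudef
    have huC : u ∈ C := by
      refine Submodule.sum_mem _ fun i _ => ?_
      exact hCsm _ _ ((Submodule.le_topologicalClosure _) (Submodule.subset_span ⟨i, rfl⟩))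
    refine ⟨u, huC, ?_⟩
    have hmku : (Submodule.Quotient.mk u : W ⧸ Rhat) = q := by
      rw [hudef]
      have : (Submodule.Quotient.mk (∑ i, wsm (B.repr q i) (ℓ i)) : W ⧸ Rhat) =
          ∑ i, Rhat.mkQ (wsm (B.repr q i) (ℓ i)) := by
        rw [← map_sum]
        rfl
      rw [this]
      have : ∀ i, Rhat.mkQ (wsm (B.repr q i) (ℓ i)) = B.repr q i • B i := by
        intro i
        rw [← smul_def, map_smul, Rhat.mkQ_apply, hℓ]
      rw [Finset.sum_congr rfl fun i _ => this i]
      exact B.sum_repr q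
    have : (Submodule.Quotient.mk (w - u) : W ⧸ Rhat) = 0 := by
      rw [Submodule.Quotient.mk_sub, hmku]
      exact sub_self q
    exact (Submodule.Quotient.mk_eq_zero Rhat).mp this
  exact ⟨m0, C, hCc, hCsub, hdisj, hspan2⟩

end Statement8

/-!  Statement 8: a continuous linear map `α : V → W` of Hausdorff LF-spaces
over `F` with finite dimensional cokernel is strict and has closed image.

An LF-space is encoded as a countable increasing union of submodules, each
complete and metrizable (Fréchet) in the induced structure, the total space
carrying the inductive-limit (final) topology. -/

theorem statement8 {F V W : Type*} [NontriviallyNormedField F]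
    [AddCommGroup V] [Module F V] [UniformSpace V] [IsUniformAddGroup V]
    [ContinuousSMul F V] [T2Space V]
    [AddCommGroup W] [Module F W] [UniformSpace W] [IsUniformAddGroup W]
    [ContinuousSMul F W] [T2Space W]
    -- LF-structure on `V`
    (Vn : ℕ → Submodule F V) (hVmono : Monotone Vn)
    (hVunion : ∀ v : V, ∃ n, v ∈ Vn n)
    (hVcomplete : ∀ n, IsComplete (Vn n : Set V))
    (hVmetr : ∀ n, TopologicalSpace.MetrizableSpace (Vn n))
    (hVfinal : ∀ S : Set V, IsOpen S ↔ ∀ n, IsOpen ((Subtype.val : Vn n → V) ⁻¹' S))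
    -- LF-structure on `W`
    (Wn : ℕ → Submodule F W) (hWmono : Monotone Wn)
    (hWunion : ∀ w : W, ∃ n, w ∈ Wn n)
    (hWcomplete : ∀ n, IsComplete (Wn n : Set W))
    (hWmetr : ∀ n, TopologicalSpace.MetrizableSpace (Wn n))
    (hWfinal : ∀ S : Set W, IsOpen S ↔ ∀ n, IsOpen ((Subtype.val : Wn n → W) ⁻¹' S))
    -- a continuous linear map with finite dimensional cokernel
    (α : V →L[F] W)
    (hcoker : FiniteDimensional F (W ⧸ LinearMap.range (α : V →ₗ[F] W))) :
    IsClosed (Set.range α) ∧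
    ∀ U : Set V, IsOpen U → ∃ S : Set W, IsOpen S ∧ α '' U = S ∩ Set.range α := by
  classical
  haveI : CompletableTopField F := Statement8.aux_completableTopField
  set R : Submodule F W := LinearMap.range (α : V →ₗ[F] W) with hRdef
  have hR : (R : Set W) = Set.range ⇑α := LinearMap.coe_range (α : V →ₗ[F] W)
  obtain ⟨m0, C, hCc, hCsub, hdisj, hspan⟩ :=
    Statement8.exists_complement Wn hWmono hWunion hWcomplete Vn hVunion hVcomplete α R hR hcoker
  -- the main local statement, for every large enough piece of W
  have main : ∀ m : ℕ, (C : Set W) ⊆ (Wn m : Set W) →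
      (∀ wbar : ↥(Wn m), (wbar : W) ∉ Set.range ⇑α →
        ∃ O : Set ↥(Wn m), IsOpen O ∧ wbar ∈ O ∧ ∀ y ∈ O, (y : W) ∉ Set.range ⇑α) ∧
      (∀ U : Set V, IsOpen U → ∀ wbar : ↥(Wn m), (wbar : W) ∈ (⇑α '' U + (C : Set W)) →
        ∃ O : Set ↥(Wn m), IsOpen O ∧ wbar ∈ O ∧
          ∀ y ∈ O, (y : W) ∈ (⇑α '' U + (C : Set W))) := by
    intro m hm
    set Xm : ℕ → Submodule F V := fun n => Vn n ⊓ Submodule.comap (α : V →ₗ[F] W) (Wn m)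
      with hXmdef
    have hXmem : ∀ n (x : V), x ∈ Xm n → α x ∈ Wn m := fun n x hx =>
      Submodule.mem_comap.mp hx.2
    have hXcomplete : ∀ n, IsComplete ((Xm n : Submodule F V) : Set V) := by
      intro n
      have heq : ((Xm n : Submodule F V) : Set V) =
          (Vn n : Set V) ∩ (⇑α ⁻¹' (Wn m : Set W)) := rfl
      rw [heq]
      exact Statement8.isComplete_of_isClosed_subset (hVcomplete n)
        (((hVcomplete n).isClosed).inter (((hWcomplete m).isClosed).preimage α.continuous))
        inter_subset_left
    let g : ∀ n : ℕ, (↥(Xm n) × ↥C) →ₗ[F] ↥(Wn m) := fun n =>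
      { toFun := fun p => ⟨α (p.1 : V) + (p.2 : W),
          (Wn m).add_mem (hXmem n _ p.1.2) (hm p.2.2)⟩
        map_add' := fun p q => by
          apply Subtype.ext
          show α ((p.1 : V) + (q.1 : V)) + ((p.2 : W) + (q.2 : W)) = _
          rw [map_add]
          show _ = (α (p.1 : V) + (p.2 : W)) + (α (q.1 : V) + (q.2 : W))
          abel
        map_smul' := fun a p => by
          apply Subtype.ext
          show α (a • (p.1 : V)) + (a • (p.2 : W)) = a • (α (p.1 : V) + (p.2 : W))
          rw [map_smul, smul_add] }
    have hgc : ∀ n, Continuous ⇑(g n) := fun n =>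
      ((α.continuous.comp (continuous_subtype_val.comp continuous_fst)).add
        (continuous_subtype_val.comp continuous_snd)).subtype_mk _
    have hcover : ∀ y : ↥(Wn m), ∃ n, y ∈ Set.range ⇑(g n) := by
      intro y
      obtain ⟨c, hcC, hcr⟩ := hspan (y : W)
      obtain ⟨v, hv⟩ := LinearMap.mem_range.mp hcr
      obtain ⟨n, hn⟩ := hVunion v
      have hαv : α v ∈ Wn m := by
        rw [← ContinuousLinearMap.coe_coe, hv]
        exact (Wn m).sub_mem y.2 (hm hcC)
      refine ⟨n, ⟨(⟨v, ⟨hn, Submodule.mem_comap.mpr hαv⟩⟩, ⟨c, hcC⟩), ?_⟩⟩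
      apply Subtype.ext
      show α v + c = (y : W)
      rw [← ContinuousLinearMap.coe_coe, hv]
      abel
    haveI : CompleteSpace ↥(Wn m) := (hWcomplete m).completeSpace_coe
    haveI : TopologicalSpace.MetrizableSpace ↥(Wn m) := hWmetr m
    haveI : BaireSpace ↥(Wn m) := Statement8.baireSpace_of_complete
    obtain ⟨n, hnm⟩ : ∃ n, ¬ IsMeagre (Set.range ⇑(g n)) := by
      by_contra h
      push_neg at h
      have hcov2 : (univ : Set ↥(Wn m)) ⊆ ⋃ n, Set.range ⇑(g n) := fun y _ =>
        mem_iUnion.2 (hcover y)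
      exact Statement8.not_isMeagre_univ (((isMeagre_iUnion h).mono) hcov2)
    haveI : CompleteSpace ↥(Xm n) := (hXcomplete n).completeSpace_coe
    haveI : CompleteSpace ↥C := hCc.completeSpace_coe
    haveI : TopologicalSpace.MetrizableSpace ↥(Xm n) :=
      Statement8.metrizable_of_le inf_le_left (hVmetr n)
    haveI : TopologicalSpace.MetrizableSpace ↥C :=
      Statement8.metrizable_of_le (fun x hx => hCsub hx) (hWmetr m0)
    obtain ⟨hopen, hsurj⟩ := Statement8.bs_isOpenMap_surjective (hgc n) hnm
    constructor
    · -- complement of the range is open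
      intro wbar hwbar
      obtain ⟨c, hcC, hcr⟩ := hspan (wbar : W)
      have hc0 : c ≠ 0 := by
        intro h0
        apply hwbar
        rw [h0, sub_zero] at hcr
        rw [← hR]
        exact hcr
      set B : Set ↥C := {x : ↥C | (x : W) ≠ -c} with hBdef
      have hBopen : IsOpen B := isOpen_compl_singleton.preimage continuous_subtype_val
      have hB0 : (0 : ↥C) ∈ B := by
        show ((0 : ↥C) : W) ≠ -c
        simp only [Submodule.coe_zero]
        intro h
        exact hc0 (by rw [← neg_eq_zero, ← h])
      have hO'open : IsOpen (⇑(g n) '' (univ ×ˢ B)) := hopen _ (isOpen_univ.prod hBopen)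
      have hO'0 : (0 : ↥(Wn m)) ∈ ⇑(g n) '' (univ ×ˢ B) :=
        ⟨(0, 0), ⟨mem_univ _, hB0⟩, by exact map_zero (g n)⟩
      refine ⟨(fun y => wbar + y) '' (⇑(g n) '' (univ ×ˢ B)),
        (Homeomorph.addLeft wbar).isOpenMap _ hO'open, ⟨0, hO'0, by show wbar + 0 = wbar; rw [add_zero]⟩, ?_⟩
      rintro _ ⟨_, ⟨⟨x, b⟩, ⟨-, hbB⟩, rfl⟩, rfl⟩
      rintro ⟨v, hv⟩
      -- hv : α v = ↑wbar + (α ↑x + ↑b)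
      have hcb : c + (b : W) ∈ C := C.add_mem hcC b.2
      have hcbR : c + (b : W) ∈ R := by
        have : c + (b : W) = α v - α (x : V) - ((wbar : W) - c) := by
          have hv' : α v = (wbar : W) + (α (x : V) + (b : W)) := hv
          rw [hv']
          abel
        rw [this]
        exact R.sub_mem (R.sub_mem (LinearMap.mem_range.mpr ⟨v, rfl⟩)
          (LinearMap.mem_range.mpr ⟨x, rfl⟩)) hcr
      have := hdisj _ hcb hcbR
      exact hbB (eq_neg_of_add_eq_zero_left (by rw [add_comm]; exact this))
    · -- the set α '' U + C is open
      intro U hU wbar hwmem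
      obtain ⟨a, ha, c, hcC, hac⟩ := hwmem
      obtain ⟨u, hu, rfl⟩ := ha
      set A : Set ↥(Xm n) := {x | (x : V) + u ∈ U} with hAdef
      have hAopen : IsOpen A := hU.preimage (continuous_subtype_val.add continuous_const)
      have hA0 : (0 : ↥(Xm n)) ∈ A := by
        show ((0 : ↥(Xm n)) : V) + u ∈ U
        rw [Submodule.coe_zero, zero_add]
        exact hu
      have hO'open : IsOpen (⇑(g n) '' (A ×ˢ univ)) := hopen _ (hAopen.prod isOpen_univ)
      have hO'0 : (0 : ↥(Wn m)) ∈ ⇑(g n) '' (A ×ˢ univ) :=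
        ⟨(0, 0), ⟨hA0, mem_univ _⟩, by exact map_zero (g n)⟩
      refine ⟨(fun y => wbar + y) '' (⇑(g n) '' (A ×ˢ univ)),
        (Homeomorph.addLeft wbar).isOpenMap _ hO'open, ⟨0, hO'0, by show wbar + 0 = wbar; rw [add_zero]⟩, ?_⟩
      rintro _ ⟨_, ⟨⟨x, b⟩, ⟨hxA, -⟩, rfl⟩, rfl⟩
      refine ⟨α ((x : V) + u), ⟨(x : V) + u, hxA, rfl⟩, c + (b : W), C.add_mem hcC b.2, ?_⟩
      show α ((x : V) + u) + (c + (b : W)) = (wbar : W) + ((g n) (x, b) : W)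
      have : ((g n) (x, b) : W) = α (x : V) + (b : W) := rfl
      rw [this, ← hac, map_add]
      beta_reduce
      abel
  -- conclude
  constructor
  · rw [← isOpen_compl_iff, hWfinal]
    intro k
    have hmge : (C : Set W) ⊆ (Wn (max k m0) : Set W) := fun x hx =>
      hWmono (le_max_right _ _) (hCsub hx)
    have hkm : Wn k ≤ Wn (max k m0) := hWmono (le_max_left _ _)
    obtain ⟨h1, -⟩ := main (max k m0) hmge
    rw [isOpen_iff_forall_mem_open]
    intro x hx
    obtain ⟨O, hOopen, hOx, hOprop⟩ := h1 ⟨(x : W), hkm x.2⟩ hx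
    refine ⟨(fun z : ↥(Wn k) => (⟨(z : W), hkm z.2⟩ : ↥(Wn (max k m0)))) ⁻¹' O,
      fun z hz => hOprop _ hz, hOopen.preimage (Continuous.subtype_mk continuous_subtype_val _),
      hOx⟩
  · intro U hU
    refine ⟨⇑α '' U + (C : Set W), ?_, ?_⟩
    · rw [hWfinal]
      intro k
      have hmge : (C : Set W) ⊆ (Wn (max k m0) : Set W) := fun x hx =>
        hWmono (le_max_right _ _) (hCsub hx)
      have hkm : Wn k ≤ Wn (max k m0) := hWmono (le_max_left _ _)
      obtain ⟨-, h2⟩ := main (max k m0) hmge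
      rw [isOpen_iff_forall_mem_open]
      intro x hx
      obtain ⟨O, hOopen, hOx, hOprop⟩ := h2 U hU ⟨(x : W), hkm x.2⟩ hx
      refine ⟨(fun z : ↥(Wn k) => (⟨(z : W), hkm z.2⟩ : ↥(Wn (max k m0)))) ⁻¹' O,
        fun z hz => hOprop _ hz, hOopen.preimage (Continuous.subtype_mk continuous_subtype_val _),
        hOx⟩
    · ext w
      constructor
      · rintro ⟨u, hu, rfl⟩
        exact ⟨⟨α u, ⟨u, hu, rfl⟩, 0, C.zero_mem, add_zero _⟩, ⟨u, rfl⟩⟩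
      · rintro ⟨hwS, v, rfl⟩
        obtain ⟨a, ⟨u, hu, rfl⟩, c, hcC, hac⟩ := hwS
        have hac' : α u + c = α v := hac
        have hcR : c ∈ R := by
          have hceq : c = α v - α u := (eq_sub_of_add_eq' hac')
          rw [hceq]
          exact R.sub_mem (LinearMap.mem_range.mpr ⟨v, rfl⟩) (LinearMap.mem_range.mpr ⟨u, rfl⟩)
        have hc0 := hdisj c hcC hcR
        rw [← hac', hc0, add_zero]
        exact ⟨u, hu, rfl⟩
end
end
end
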